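/- In the simple iterative scheme x^{k+1} ∈ argmin_{‖x‖_p = 1}( r^k‖x‖_∞ − ⟨x, s^k⟩ ), r^{k+1} = F(x^{k+1}), s^{k+1} ∈ ∂I(x^{k+1}), starting from any x^0 ≠ 0 with r^0 = F(x^0) and s^0 ∈ ∂I(x^0), the sequence (r^k) is monotonically nondecreasing. -/

import Mathlib

open Finset
open scoped ENNReal

noncomputable def Ifun {n : ℕ} (w : Fin n → Fin n → ℝ) (x : Fin n → ℝ) : ℝ :=
  (1 / 2) * ∑ i, ∑ j, w i j * |x i - x j|

noncomputable def SgnSet (t : ℝ) : Set ℝ :=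
  if 0 < t then {1} else if t < 0 then {-1} else Set.Icc (-1) 1

noncomputable def subgrad {n : ℕ} (w : Fin n → Fin n → ℝ) (y : Fin n → ℝ) :
    Set (Fin n → ℝ) :=
  {s | ∃ z : Fin n → Fin n → ℝ, (∀ i j, z i j ∈ SgnSet (y i - y j)) ∧
    (∀ i j, z i j = - z j i) ∧ ∀ i, s i = ∑ j, w i j * z i j}

noncomputable def pnorm {n : ℕ} (p : ℝ≥0∞) (x : Fin n → ℝ) : ℝ :=
  if p = ⊤ then ‖x‖ else (∑ i, |x i| ^ p.toReal) ^ (1 / p.toReal)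

/-!
Write `F x = I(x) / ‖x‖_∞` and let `s ∈ ∂I(x)`. Since `⟨x, s⟩ = I(x)`, the objective
`y ↦ F(x) ‖y‖_∞ - ⟨y, s⟩` vanishes on the ray through `x`, which meets the unit `p`-sphere;
so its minimum `x'` there has `F(x) ‖x'‖_∞ ≤ ⟨x', s⟩ ≤ I(x')`, i.e. `F(x) ≤ F(x')`.
If `x = 0`, then `F(x) = 0` because `t / 0 = 0`, and `F(x') ≥ 0` suffices.
-/

lemma abs_le_one_of_mem_SgnSet {t z : ℝ} (h : z ∈ SgnSet t) : |z| ≤ 1 := by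
  unfold SgnSet at h
  split_ifs at h
  · simp [Set.mem_singleton_iff.mp h]
  · simp [Set.mem_singleton_iff.mp h]
  · exact abs_le.mpr h

lemma mul_eq_abs_of_mem_SgnSet {t z : ℝ} (h : z ∈ SgnSet t) : z * t = |t| := by
  unfold SgnSet at h
  split_ifs at h with hpos hneg
  · simp [Set.mem_singleton_iff.mp h, abs_of_pos hpos]
  · simp [Set.mem_singleton_iff.mp h, abs_of_neg hneg]
  · simp [le_antisymm (not_lt.mp hpos) (not_lt.mp hneg)]

section Subgradient

variable {n : ℕ} {w : Fin n → Fin n → ℝ}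

lemma Ifun_nonneg (hnn : ∀ i j, 0 ≤ w i j) (x : Fin n → ℝ) : 0 ≤ Ifun w x := by
  unfold Ifun
  exact mul_nonneg (by norm_num) <| sum_nonneg fun i _ => sum_nonneg fun j _ =>
    mul_nonneg (hnn i j) (abs_nonneg _)

lemma sum_mul_sum_eq_half_sum_sub (hsym : ∀ i j, w i j = w j i)
    {z : Fin n → Fin n → ℝ} (hz : ∀ i j, z i j = - z j i) (v : Fin n → ℝ) :
    ∑ i, v i * ∑ j, w i j * z i j = (1 / 2) * ∑ i, ∑ j, w i j * (z i j * (v i - v j)) := by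
  have hleft : ∑ i, v i * ∑ j, w i j * z i j = ∑ i, ∑ j, w i j * (z i j * v i) := by
    simp only [mul_sum]
    exact sum_congr rfl fun i _ => sum_congr rfl fun j _ => by ring
  have hright : ∑ i, v i * ∑ j, w i j * z i j = -∑ i, ∑ j, w i j * (z i j * v j) := by
    rw [hleft, sum_comm, ← sum_neg_distrib]
    refine sum_congr rfl fun i _ => ?_
    rw [← sum_neg_distrib]
    exact sum_congr rfl fun j _ => by rw [hsym j i, hz j i]; ring
  have hsplit : ∑ i, ∑ j, w i j * (z i j * (v i - v j))
      = ∑ i, ∑ j, w i j * (z i j * v i) - ∑ i, ∑ j, w i j * (z i j * v j) := by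
    rw [← sum_sub_distrib]
    exact sum_congr rfl fun i _ => by rw [← sum_sub_distrib]; exact sum_congr rfl fun j _ => by ring
  linarith

lemma sum_mul_eq_Ifun_of_mem_subgrad (hsym : ∀ i j, w i j = w j i)
    {x s : Fin n → ℝ} (hs : s ∈ subgrad w x) : ∑ i, x i * s i = Ifun w x := by
  obtain ⟨z, hzsgn, hzanti, hsz⟩ := hs
  obtain rfl : s = fun i => ∑ j, w i j * z i j := funext hsz
  rw [sum_mul_sum_eq_half_sum_sub hsym hzanti, Ifun]
  simp only [mul_eq_abs_of_mem_SgnSet (hzsgn _ _)]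

lemma sum_mul_le_Ifun_of_mem_subgrad (hsym : ∀ i j, w i j = w j i)
    (hnn : ∀ i j, 0 ≤ w i j) {x s : Fin n → ℝ} (hs : s ∈ subgrad w x) (v : Fin n → ℝ) :
    ∑ i, v i * s i ≤ Ifun w v := by
  obtain ⟨z, hzsgn, hzanti, hsz⟩ := hs
  obtain rfl : s = fun i => ∑ j, w i j * z i j := funext hsz
  rw [sum_mul_sum_eq_half_sum_sub hsym hzanti, Ifun]
  gcongr with i _ j _
  · exact hnn i j
  calc z i j * (v i - v j) ≤ |z i j| * |v i - v j| := by rw [← abs_mul]; exact le_abs_self _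
    _ ≤ |v i - v j| := mul_le_of_le_one_left (abs_nonneg _) (abs_le_one_of_mem_SgnSet (hzsgn i j))

end Subgradient

section PNorm

variable {n : ℕ} {p : ℝ≥0∞}

lemma pnorm_smul (hp : p ≠ 0) (c : ℝ) (x : Fin n → ℝ) :
    pnorm p (c • x) = |c| * pnorm p x := by
  unfold pnorm
  split_ifs with htop
  · rw [norm_smul, Real.norm_eq_abs]
  · have hpos : 0 < p.toReal := ENNReal.toReal_pos hp htop
    simp only [Pi.smul_apply, smul_eq_mul, abs_mul,
      Real.mul_rpow (abs_nonneg c) (abs_nonneg _), ← mul_sum]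
    rw [Real.mul_rpow (by positivity) (by positivity), ← Real.rpow_mul (abs_nonneg c),
      mul_one_div_cancel hpos.ne', Real.rpow_one]

lemma pnorm_zero (hp : p ≠ 0) : pnorm p (0 : Fin n → ℝ) = 0 := by
  simpa using pnorm_smul hp 0 (0 : Fin n → ℝ)

lemma pnorm_pos (hp : p ≠ 0) {x : Fin n → ℝ} (hx : x ≠ 0) : 0 < pnorm p x := by
  unfold pnorm
  split_ifs with htop
  · exact norm_pos_iff.mpr hx
  · have hpos : 0 < p.toReal := ENNReal.toReal_pos hp htop
    obtain ⟨i, hi⟩ := Function.ne_iff.mp hx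
    have hterm : 0 < |x i| ^ p.toReal := Real.rpow_pos_of_pos (abs_pos.mpr hi) _
    exact Real.rpow_pos_of_pos (hterm.trans_le (single_le_sum
      (fun j _ => Real.rpow_nonneg (abs_nonneg (x j)) _) (mem_univ i))) _

lemma exists_pos_pnorm_smul_eq_one (hp : p ≠ 0) {x : Fin n → ℝ} (hx : x ≠ 0) :
    ∃ c : ℝ, 0 < c ∧ pnorm p (c • x) = 1 := by
  have hpos := pnorm_pos hp hx
  refine ⟨(pnorm p x)⁻¹, inv_pos.mpr hpos, ?_⟩
  rw [pnorm_smul hp, abs_of_pos (inv_pos.mpr hpos), inv_mul_cancel₀ hpos.ne']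

end PNorm

lemma Ifun_div_norm_le_of_isMinOn {n : ℕ} {w : Fin n → Fin n → ℝ}
    (hsym : ∀ i j, w i j = w j i) (hnn : ∀ i j, 0 ≤ w i j) {p : ℝ≥0∞} (hp : p ≠ 0)
    {x x' s : Fin n → ℝ} (hs : s ∈ subgrad w x) (hx' : pnorm p x' = 1)
    (hmin : IsMinOn (fun y => Ifun w x / ‖x‖ * ‖y‖ - ∑ i, y i * s i) {y | pnorm p y = 1} x') :
    Ifun w x / ‖x‖ ≤ Ifun w x' / ‖x'‖ := by
  have hx'pos : 0 < ‖x'‖ := by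
    refine norm_pos_iff.mpr fun h => ?_
    rw [h, pnorm_zero hp] at hx'
    exact zero_ne_one hx'
  by_cases hx : x = 0
  · simpa [hx] using div_nonneg (Ifun_nonneg hnn x') hx'pos.le
  set r := Ifun w x / ‖x‖
  obtain ⟨c, hc, hcx⟩ := exists_pos_pnorm_smul_eq_one hp hx
  have hray : r * ‖c • x‖ - ∑ i, (c • x) i * s i = 0 := by
    have hrx : r * ‖x‖ = Ifun w x := div_mul_cancel₀ _ (norm_ne_zero_iff.mpr hx)
    simp only [norm_smul, Real.norm_of_nonneg hc.le, Pi.smul_apply, smul_eq_mul, mul_assoc,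
      ← mul_sum, sum_mul_eq_Ifun_of_mem_subgrad hsym hs, ← hrx]
    ring
  have hopt : r * ‖x'‖ - ∑ i, x' i * s i ≤ 0 := hray ▸ hmin hcx
  rw [le_div_iff₀ hx'pos]
  linarith [sum_mul_le_Ifun_of_mem_subgrad hsym hnn hs x']

theorem stmt16_general {n : ℕ} (w : Fin n → Fin n → ℝ)
    (hsym : ∀ i j, w i j = w j i) (hnn : ∀ i j, 0 ≤ w i j)
    (p : ℝ≥0∞) (hp : 1 ≤ p)
    (x : ℕ → Fin n → ℝ) (r : ℕ → ℝ) (s : ℕ → Fin n → ℝ)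
    (hr : ∀ k, r k = Ifun w (x k) / ‖x k‖)
    (hs : ∀ k, s k ∈ subgrad w (x k))
    (hmin : ∀ k, pnorm p (x (k + 1)) = 1 ∧
      ∀ y : Fin n → ℝ, pnorm p y = 1 →
        r k * ‖x (k + 1)‖ - ∑ i, x (k + 1) i * s k i ≤ r k * ‖y‖ - ∑ i, y i * s k i) :
    ∀ k, r k ≤ r (k + 1) := by
  intro k
  obtain ⟨hnorm, hopt⟩ := hmin k
  rw [hr k] at hopt ⊢
  rw [hr (k + 1)]
  exact Ifun_div_norm_le_of_isMinOn hsym hnn (zero_lt_one.trans_le hp).ne' (hs k) hnorm hopt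

/-- In the simple iterative scheme, the sequence `(r^k)` is monotonically nondecreasing. -/
theorem stmt16 {n : ℕ} (w : Fin n → Fin n → ℝ)
    (hsym : ∀ i j, w i j = w j i) (hnn : ∀ i j, 0 ≤ w i j)
    (p : ℝ≥0∞) (hp : 1 ≤ p)
    (x : ℕ → Fin n → ℝ) (r : ℕ → ℝ) (s : ℕ → Fin n → ℝ)
    (hx0 : x 0 ≠ 0)
    (hr : ∀ k, r k = Ifun w (x k) / ‖x k‖)
    (hs : ∀ k, s k ∈ subgrad w (x k))
    (hmin : ∀ k, pnorm p (x (k + 1)) = 1 ∧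
      ∀ y : Fin n → ℝ, pnorm p y = 1 →
        r k * ‖x (k + 1)‖ - ∑ i, x (k + 1) i * s k i ≤ r k * ‖y‖ - ∑ i, y i * s k i) :
    ∀ k, r k ≤ r (k + 1) :=
  stmt16_general w hsym hnn p hp x r s hr hs hmin
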